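/- Suppose K(·,x) ∈ C₀(X) for every x ∈ X, span{K(·,x) : x ∈ X} is dense in C₀(X), and let x₁,…,x_m ∈ X be pairwise distinct with K[x] invertible. The following are equivalent: (i) for every y ∈ ℝ^m, the minimal norm interpolation problem inf{‖ν‖ : ν ∈ M(X), ν supported on a countable subset of X, f_ν(x_j) = y_j for all j} has a minimizer of the form Σ_{j=1}^m c_j δ_{x_j} for some c ∈ ℝ^m; (ii) ‖K[x]^{-1} K_x(x)‖₁ ≤ 1 for all x ∈ X. -/

import Mathlib

open MeasureTheory Matrix

/-- The integral of a function against a finite signed Borel measure,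
defined via the Jordan decomposition. -/
noncomputable def sintegral {X : Type*} [MeasurableSpace X]
    (μ : SignedMeasure X) (f : X → ℝ) : ℝ :=
  (∫ t, f t ∂μ.toJordanDecomposition.posPart) - ∫ t, f t ∂μ.toJordanDecomposition.negPart

/-- The total variation norm of a finite signed Borel measure. -/
noncomputable def tvNorm {X : Type*} [MeasurableSpace X] (μ : SignedMeasure X) : ℝ :=
  (μ.totalVariation Set.univ).toReal

/-- The Dirac measure at a point, as a signed measure. -/
noncomputable def diracSM {X : Type*} [MeasurableSpace X] (x : X) : SignedMeasure X :=
  (Measure.dirac x).toSignedMeasure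

/-- A signed measure is supported on a countable subset of `X`. -/
def CountablySupported {X : Type*} [MeasurableSpace X] (ν : SignedMeasure X) : Prop :=
  ∃ S : Set X, S.Countable ∧ ν.totalVariation Sᶜ = 0

/-!
A combination `μ_c = ∑ c_k δ_{x_k}` interpolates `y` exactly when `K[x] c = y`, and
`‖μ_c‖ = ‖c‖₁`. For (ii) ⇒ (i), let `c = K[x]⁻¹ y` and `s = sign c`: the function
`g = ∑_j ((K[x]⁻¹)ᵀ s)_j K(·, x_j)` satisfies `g(t) = s ⬝ K[x]⁻¹ K_x(t)`, so `‖g‖_∞ ≤ 1` by (ii),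
while `∫ g dν = s ⬝ K[x]⁻¹ y = ‖c‖₁` for every interpolating `ν`; hence `‖c‖₁ ≤ ‖ν‖`.
For (i) ⇒ (ii), take `y = K_x(x)`: the minimal combination has `c = K[x]⁻¹ K_x(x)`, and the point
mass `δ_x` interpolates `y` with norm `1`.
-/

open scoped BoundedContinuousFunction

section SignedMeasure

variable {X : Type*} [MeasurableSpace X]

lemma toJordanDecomposition_toSignedMeasure_sub {p q : Measure X} [IsFiniteMeasure p]
    [IsFiniteMeasure q] (h : p ⟂ₘ q) :
    (p.toSignedMeasure - q.toSignedMeasure).toJordanDecomposition = ⟨p, q, h⟩ :=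
  JordanDecomposition.toJordanDecomposition_toSignedMeasure ⟨p, q, h⟩

lemma totalVariation_toSignedMeasure_sub {p q : Measure X} [IsFiniteMeasure p]
    [IsFiniteMeasure q] (h : p ⟂ₘ q) :
    (p.toSignedMeasure - q.toSignedMeasure).totalVariation = p + q := by
  rw [SignedMeasure.totalVariation, toJordanDecomposition_toSignedMeasure_sub h]

lemma sintegral_toSignedMeasure_sub {p q : Measure X} [IsFiniteMeasure p]
    [IsFiniteMeasure q] (h : p ⟂ₘ q) (f : X → ℝ) :
    sintegral (p.toSignedMeasure - q.toSignedMeasure) f = ∫ t, f t ∂p - ∫ t, f t ∂q := by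
  rw [sintegral, toJordanDecomposition_toSignedMeasure_sub h]

lemma tvNorm_eq_add (ν : SignedMeasure X) :
    tvNorm ν = ν.toJordanDecomposition.posPart.real Set.univ
      + ν.toJordanDecomposition.negPart.real Set.univ := by
  rw [tvNorm, SignedMeasure.totalVariation, Measure.add_apply,
    ENNReal.toReal_add (measure_ne_top _ _) (measure_ne_top _ _)]
  rfl

lemma tvNorm_toSignedMeasure_sub {p q : Measure X} [IsFiniteMeasure p]
    [IsFiniteMeasure q] (h : p ⟂ₘ q) :
    tvNorm (p.toSignedMeasure - q.toSignedMeasure) = p.real Set.univ + q.real Set.univ := by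
  rw [tvNorm_eq_add, toJordanDecomposition_toSignedMeasure_sub h]

variable [TopologicalSpace X] [OpensMeasurableSpace X]

lemma sintegral_sum_smul (ν : SignedMeasure X) {ι : Type*} [Fintype ι] (a : ι → ℝ)
    (f : ι → X →ᵇ ℝ) :
    sintegral ν ⇑(∑ i, a i • f i) = ∑ i, a i * sintegral ν (f i) := by
  simp only [sintegral, BoundedContinuousFunction.coe_sum, BoundedContinuousFunction.coe_smul,
    Finset.sum_apply, smul_eq_mul]
  rw [integral_finsetSum _ fun i _ => ((f i).integrable _).const_mul (a i),
    integral_finsetSum _ fun i _ => ((f i).integrable _).const_mul (a i),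
    ← Finset.sum_sub_distrib]
  simp only [integral_const_mul, mul_sub]

lemma abs_sintegral_le (ν : SignedMeasure X) (f : X →ᵇ ℝ) :
    |sintegral ν f| ≤ ‖f‖ * tvNorm ν := by
  set P := ν.toJordanDecomposition.posPart
  set N := ν.toJordanDecomposition.negPart
  calc |sintegral ν f| ≤ |∫ t, f t ∂P| + |∫ t, f t ∂N| := abs_sub _ _
    _ ≤ P.real Set.univ * ‖f‖ + N.real Set.univ * ‖f‖ :=
        add_le_add (f.norm_integral_le_mul_norm P) (f.norm_integral_le_mul_norm N)
    _ = ‖f‖ * tvNorm ν := by rw [tvNorm_eq_add]; ring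

end SignedMeasure

lemma MeasureTheory.Measure.regular_of_measure_compl_eq_zero {X : Type*} [MeasurableSpace X]
    [TopologicalSpace X] [T1Space X] [OpensMeasurableSpace X] (μ : Measure X) [IsFiniteMeasure μ]
    {F : Set X} (hF : F.Finite) (hμF : μ Fᶜ = 0) : μ.Regular where
  toOuterRegular := ⟨fun A hA r hr => by
    have hFA : IsClosed (F \ A) := (hF.subset Set.sdiff_subset).isClosed
    refine ⟨(F \ A)ᶜ, fun a ha h => h.2 ha, hFA.isOpen_compl, ?_⟩
    rw [← measure_inter_conull hμF] at hr ⊢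
    rwa [show (F \ A)ᶜ ∩ F = A ∩ F by ext; simp; tauto]⟩
  innerRegular U hU r hr :=
    ⟨U ∩ F, Set.inter_subset_left, (hF.subset Set.inter_subset_right).isCompact,
      by rwa [measure_inter_conull hμF]⟩

section DiracSum

variable {X : Type*} [MeasurableSpace X] [MeasurableSingletonClass X] {ι : Type*} [Fintype ι]

/-- The positive part of `∑ i, w i • δ_{x i}` when the `x i` are distinct: negative weights are
clipped to `0` by `ENNReal.ofReal`. -/
noncomputable def diracSum (x : ι → X) (w : ι → ℝ) : Measure X :=
  ∑ i, ENNReal.ofReal (w i) • Measure.dirac (x i)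

open Classical in
lemma diracSum_apply (x : ι → X) (w : ι → ℝ) (s : Set X) :
    diracSum x w s = ∑ i, if x i ∈ s then ENNReal.ofReal (w i) else 0 := by
  simp [diracSum, Measure.finsetSum_apply, Measure.dirac_apply, Set.indicator_apply]

instance (x : ι → X) (w : ι → ℝ) : IsFiniteMeasure (diracSum x w) :=
  ⟨by simp [diracSum_apply, ENNReal.sum_lt_top]⟩

lemma diracSum_real_univ (x : ι → X) (w : ι → ℝ) :
    (diracSum x w).real Set.univ = ∑ i, max (w i) 0 := by
  simp [measureReal_def, diracSum_apply, ENNReal.toReal_sum, ENNReal.toReal_ofReal']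

lemma integral_diracSum (x : ι → X) (w : ι → ℝ) (f : X → ℝ) :
    ∫ t, f t ∂diracSum x w = ∑ i, max (w i) 0 * f (x i) := by
  rw [diracSum, integral_finsetSum_measure fun i _ =>
    (integrable_dirac (by simp)).smul_measure ENNReal.ofReal_ne_top]
  simp [integral_smul_measure, integral_dirac, ENNReal.toReal_ofReal']

lemma diracSum_compl_range (x : ι → X) (w : ι → ℝ) : diracSum x w (Set.range x)ᶜ = 0 := by
  simp [diracSum_apply]

lemma diracSum_mutuallySingular {x : ι → X} (hx : Function.Injective x) (w : ι → ℝ) :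
    diracSum x w ⟂ₘ diracSum x (-w) := by
  refine ⟨x '' {i | w i ≤ 0}, (Set.toFinite _).measurableSet, ?_, ?_⟩ <;>
    refine (diracSum_apply _ _ _).trans (Finset.sum_eq_zero fun i _ => ?_)
  · simp [hx.eq_iff]
  · simpa [hx.eq_iff] using le_of_lt

lemma sum_smul_diracSM_eq_sub (x : ι → X) (w : ι → ℝ) :
    ∑ i, w i • diracSM (x i) =
      (diracSum x w).toSignedMeasure - (diracSum x (-w)).toSignedMeasure := by
  ext s hs
  simp only [diracSM, _root_.sub_apply, FunLike.coe_sum, Finset.sum_apply, _root_.smul_apply,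
    Measure.toSignedMeasure_apply_measurable hs, measureReal_def, diracSum_apply,
    Measure.dirac_apply]
  rw [ENNReal.toReal_sum fun i _ => by finiteness, ENNReal.toReal_sum fun i _ => by finiteness,
    ← Finset.sum_sub_distrib]
  refine Finset.sum_congr rfl fun i _ => ?_
  by_cases h : x i ∈ s <;> simp [h, ENNReal.toReal_ofReal', max_zero_sub_max_neg_zero_eq_self]

end DiracSum

section SumSmulDiracSM

variable {X : Type*} [MeasurableSpace X] [MeasurableSingletonClass X] {ι : Type*} [Fintype ι]
  {x : ι → X}

lemma totalVariation_sum_smul_diracSM (hx : Function.Injective x) (w : ι → ℝ) :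
    (∑ i, w i • diracSM (x i)).totalVariation = diracSum x w + diracSum x (-w) := by
  rw [sum_smul_diracSM_eq_sub,
    totalVariation_toSignedMeasure_sub (diracSum_mutuallySingular hx w)]

lemma tvNorm_sum_smul_diracSM (hx : Function.Injective x) (w : ι → ℝ) :
    tvNorm (∑ i, w i • diracSM (x i)) = ∑ i, |w i| := by
  rw [sum_smul_diracSM_eq_sub, tvNorm_toSignedMeasure_sub (diracSum_mutuallySingular hx w),
    diracSum_real_univ, diracSum_real_univ, ← Finset.sum_add_distrib]
  refine Finset.sum_congr rfl fun i _ => ?_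
  rcases le_total (w i) 0 with h | h <;> simp [h, abs_of_nonneg, abs_of_nonpos]

lemma sintegral_sum_smul_diracSM (hx : Function.Injective x) (w : ι → ℝ) (f : X → ℝ) :
    sintegral (∑ i, w i • diracSM (x i)) f = ∑ i, w i * f (x i) := by
  rw [sum_smul_diracSM_eq_sub, sintegral_toSignedMeasure_sub (diracSum_mutuallySingular hx w),
    integral_diracSum, integral_diracSum, ← Finset.sum_sub_distrib]
  simp only [Pi.neg_apply, ← sub_mul, max_zero_sub_max_neg_zero_eq_self]

lemma countablySupported_sum_smul_diracSM (hx : Function.Injective x) (w : ι → ℝ) :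
    CountablySupported (∑ i, w i • diracSM (x i)) :=
  ⟨Set.range x, (Set.finite_range x).countable, by
    simp [totalVariation_sum_smul_diracSM hx, diracSum_compl_range]⟩

lemma regular_totalVariation_sum_smul_diracSM [TopologicalSpace X] [T1Space X]
    [OpensMeasurableSpace X] (hx : Function.Injective x) (w : ι → ℝ) :
    (∑ i, w i • diracSM (x i)).totalVariation.Regular := by
  rw [totalVariation_sum_smul_diracSM hx]
  exact Measure.regular_of_measure_compl_eq_zero _ (Set.finite_range x)
    (by simp [diracSum_compl_range])

end SumSmulDiracSM

lemma abs_sign_dotProduct_le {κ : Type*} [Fintype κ] (c v : κ → ℝ) :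
    |(fun k => (SignType.sign (c k) : ℝ)) ⬝ᵥ v| ≤ ∑ k, |v k| := by
  refine (Finset.abs_sum_le_sum_abs _ _).trans (Finset.sum_le_sum fun k _ => ?_)
  rw [abs_mul]
  refine mul_le_of_le_one_left (abs_nonneg _) ?_
  rcases lt_trichotomy (c k) 0 with h | h | h <;> simp [h]

theorem sum_abs_mulVec_sintegral_le_tvNorm {X : Type*} [MeasurableSpace X] [TopologicalSpace X]
    [OpensMeasurableSpace X] {ι κ : Type*} [Fintype ι] [Fintype κ] (φ : ι → X →ᵇ ℝ)
    (A : Matrix κ ι ℝ) (hA : ∀ t, ∑ k, |(A *ᵥ fun i => φ i t) k| ≤ 1) (ν : SignedMeasure X) :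
    ∑ k, |(A *ᵥ fun i => sintegral ν (φ i)) k| ≤ tvNorm ν := by
  set c := A *ᵥ fun i => sintegral ν (φ i)
  set s : κ → ℝ := fun k => SignType.sign (c k)
  set g : X →ᵇ ℝ := ∑ i, (s ᵥ* A) i • φ i
  have hg_apply : ∀ t, g t = s ⬝ᵥ (A *ᵥ fun i => φ i t) := fun t => by
    rw [dotProduct_mulVec]
    simp [g, dotProduct]
  have hg_norm : ‖g‖ ≤ 1 := (g.norm_le zero_le_one).2 fun t => by
    rw [Real.norm_eq_abs, hg_apply]
    exact (abs_sign_dotProduct_le c _).trans (hA t)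
  have hg_sintegral : sintegral ν g = ∑ k, |c k| := by
    rw [sintegral_sum_smul, ← dotProduct, ← dotProduct_mulVec]
    exact Finset.sum_congr rfl fun k _ => sign_mul_self (c k)
  calc ∑ k, |c k| = sintegral ν g := hg_sintegral.symm
    _ ≤ ‖g‖ * tvNorm ν := (le_abs_self _).trans (abs_sintegral_le ν g)
    _ ≤ tvNorm ν := mul_le_of_le_one_left ENNReal.toReal_nonneg hg_norm

theorem stmt6_general {X : Type*} [TopologicalSpace X] [T2Space X]
    [MeasurableSpace X] [BorelSpace X]
    (K : X → ZeroAtInftyContinuousMap X ℝ)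
    (m : ℕ) (xs : Fin m → X) (hxs : Function.Injective xs)
    (Kmat : Matrix (Fin m) (Fin m) ℝ)
    (hKmat : ∀ j k, Kmat j k = (K (xs j)) (xs k))
    (hinv : IsUnit Kmat.det) :
    (∀ y : Fin m → ℝ, ∃ c : Fin m → ℝ,
      (∀ j, sintegral (∑ k, c k • diracSM (xs k)) (K (xs j)) = y j) ∧
      tvNorm (∑ k, c k • diracSM (xs k)) =
        sInf {r : ℝ | ∃ ν : SignedMeasure X, ν.totalVariation.Regular ∧
          CountablySupported ν ∧ (∀ j, sintegral ν (K (xs j)) = y j) ∧ tvNorm ν = r})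
    ↔ (∀ x : X, ∑ j, |(Kmat⁻¹ *ᵥ fun j => (K (xs j)) x) j| ≤ 1) := by
  have hinterp : ∀ c j, sintegral (∑ k, c k • diracSM (xs k)) (K (xs j)) = (Kmat *ᵥ c) j :=
    fun c j => by
      simp only [sintegral_sum_smul_diracSM hxs, mulVec, dotProduct, hKmat, mul_comm]
  constructor
  · intro hmin x
    obtain ⟨c, hc, hc_min⟩ := hmin fun j => K (xs j) x
    have hKc : Kmat *ᵥ c = fun j => K (xs j) x := funext fun j => (hinterp c j).symm.trans (hc j)
    rw [← hKc, mulVec_mulVec, nonsing_inv_mul _ hinv, one_mulVec,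
      ← tvNorm_sum_smul_diracSM hxs, hc_min]
    -- `δ_x`, written as a one-atom combination
    have hδ := Function.injective_of_subsingleton fun _ : Unit => x
    refine csInf_le ⟨0, fun _ ⟨ν, _, _, _, hν⟩ => hν ▸ ENNReal.toReal_nonneg⟩
      ⟨∑ _ : Unit, (1 : ℝ) • diracSM x, regular_totalVariation_sum_smul_diracSM hδ _,
        countablySupported_sum_smul_diracSM hδ _, fun j => ?_, ?_⟩
    · rw [sintegral_sum_smul_diracSM hδ]
      simp
    · rw [tvNorm_sum_smul_diracSM hδ]
      simp
  · intro hbound y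
    have hc : ∀ j, sintegral (∑ k, (Kmat⁻¹ *ᵥ y) k • diracSM (xs k)) (K (xs j)) = y j :=
      fun j => by rw [hinterp, mulVec_mulVec, mul_nonsing_inv _ hinv, one_mulVec]
    refine ⟨Kmat⁻¹ *ᵥ y, hc, (IsLeast.csInf_eq ⟨?_, ?_⟩).symm⟩
    · exact ⟨_, regular_totalVariation_sum_smul_diracSM hxs _,
        countablySupported_sum_smul_diracSM hxs _, hc, rfl⟩
    rintro _ ⟨ν, -, -, hν, rfl⟩
    rw [tvNorm_sum_smul_diracSM hxs, ← funext hν]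
    exact sum_abs_mulVec_sintegral_le_tvNorm (fun j => (K (xs j)).toBCF) Kmat⁻¹ hbound ν

/-- with `K(·,x) ∈ C₀(X)` (`K x : C₀(X,ℝ)` is `t ↦ K(t,x)`), density of
`span{K(·,x)}` in `C₀(X)`, pairwise distinct `x₁,…,x_m`, and `K[x]`
(entries `(K[x])_{j,k} = K(x_k,x_j)`) invertible, the following are equivalent:
(i) for every `y ∈ ℝ^m` the minimal norm interpolation over countably supported measures
has a minimizer of the form `Σ_j c_j δ_{x_j}`;
(ii) `‖K[x]⁻¹ K_x(x)‖₁ ≤ 1` for all `x ∈ X`. -/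
theorem stmt6 {X : Type*} [TopologicalSpace X] [LocallyCompactSpace X] [T2Space X]
    [MeasurableSpace X] [BorelSpace X]
    (K : X → ZeroAtInftyContinuousMap X ℝ)
    (hdense : Dense (↑(Submodule.span ℝ (Set.range K)) :
      Set (ZeroAtInftyContinuousMap X ℝ)))
    (m : ℕ) (xs : Fin m → X) (hxs : Function.Injective xs)
    (Kmat : Matrix (Fin m) (Fin m) ℝ)
    (hKmat : ∀ j k, Kmat j k = (K (xs j)) (xs k))
    (hinv : IsUnit Kmat.det) :
    (∀ y : Fin m → ℝ, ∃ c : Fin m → ℝ,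
      (∀ j, sintegral (∑ k, c k • diracSM (xs k)) (K (xs j)) = y j) ∧
      tvNorm (∑ k, c k • diracSM (xs k)) =
        sInf {r : ℝ | ∃ ν : SignedMeasure X, ν.totalVariation.Regular ∧
          CountablySupported ν ∧ (∀ j, sintegral ν (K (xs j)) = y j) ∧ tvNorm ν = r})
    ↔ (∀ x : X, ∑ j, |(Kmat⁻¹ *ᵥ fun j => (K (xs j)) x) j| ≤ 1) :=
  stmt6_general K m xs hxs Kmat hKmat hinv
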